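/- arXiv:2605.11190 — 6 statements merged into one kernel-verified Lean document; each statement's English description precedes it below -/
import Mathlib

section
/- In a category with strong factorizations, an initial object I, and an object M that is final in the subcategory of images of initial arrows, the following hold: (1) I is isomorphic to Reach(I), the image of the initial arrow I → I; (2) M is isomorphic to Obs(I), the image of the final arrow from Reach(I) to M; (3) for every object A, M is isomorphic to Obs(Reach(A)); consequently M is a subquotient of every object A. -/
open CategoryTheory Limits

/-- An arrow `g` is a strong mono if it satisfies the diagonal fill-in property
against every epi. -/
def StrongMonoP {C : Type*} [Category C] {X Y : C} (g : X ⟶ Y) : Prop :=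
  ∀ ⦃A B : C⦄ (f : A ⟶ B), Epi f → ∀ (h : A ⟶ X) (h' : B ⟶ Y),
    f ≫ h' = h ≫ g → ∃! d : B ⟶ X, f ≫ d = h ∧ d ≫ g = h'

/-- A choice of strong factorization (epi followed by strong mono) for every
arrow of the category, together with the corresponding image object. -/
structure StrongFactSystem (C : Type*) [Category C] where
  img : ∀ {A B : C}, (A ⟶ B) → C
  e : ∀ {A B : C} (h : A ⟶ B), A ⟶ img h
  m : ∀ {A B : C} (h : A ⟶ B), img h ⟶ B
  epi_e : ∀ {A B : C} (h : A ⟶ B), Epi (e h)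
  strong_m : ∀ {A B : C} (h : A ⟶ B), StrongMonoP (m h)
  fac : ∀ {A B : C} (h : A ⟶ B), e h ≫ m h = h

/-- In a category with strong factorizations, an initial object `I`, and an
object `M` that is final in the subcategory of images of initial arrows
(`F.img (hI.to A)` is `Reach A`, the image of the initial arrow `I ⟶ A`;
`φ A : Reach A ⟶ M` is the unique arrow to `M`, and `F.img (φ A)` is
`Obs(Reach A)`), we have: (1) `I ≅ Reach I`; (2) `M ≅ Obs I`;
(3) for every object `A`, `M ≅ Obs(Reach A)`; consequently `M` is a
subquotient of every object `A` (a quotient of a subobject of `A`). -/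
theorem minimal_object_exists {C : Type*} [Category C] (F : StrongFactSystem C)
    {I : C} (hI : IsInitial I) (M : C)
    (hM : ∃ A₀ : C, Nonempty (M ≅ F.img (hI.to A₀)))
    (φ : ∀ A : C, F.img (hI.to A) ⟶ M)
    (hφ : ∀ (A : C) (g : F.img (hI.to A) ⟶ M), g = φ A) :
    Nonempty (I ≅ F.img (hI.to I)) ∧
    Nonempty (M ≅ F.img (φ I)) ∧
    (∀ A : C, Nonempty (M ≅ F.img (φ A)) ∧
      ∃ (X : C) (i : X ⟶ A) (p : X ⟶ M), StrongMonoP i ∧ Epi p) := by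

  obtain ⟨A₀, ⟨ψ⟩⟩ := hM
  -- an epi from the initial object to M
  set q : I ⟶ M := F.e (hI.to A₀) ≫ ψ.inv with hq
  haveI : Epi (F.e (hI.to A₀)) := F.epi_e _
  haveI hqe : Epi q := epi_comp _ _
  -- key construction: for every A, M ≅ F.img (φ A)
  have key : ∀ A : C, ∃ (d : M ⟶ F.img (φ A)),
      d ≫ F.m (φ A) = 𝟙 M ∧ F.m (φ A) ≫ d = 𝟙 (F.img (φ A)) := by
    intro A
    have sq : q ≫ 𝟙 M = hI.to (F.img (φ A)) ≫ F.m (φ A) := hI.hom_ext _ _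
    obtain ⟨d, ⟨hd1, hd2⟩, -⟩ := F.strong_m (φ A) q hqe (hI.to (F.img (φ A))) (𝟙 M) sq
    refine ⟨d, hd2, ?_⟩
    haveI : Epi (F.e (hI.to A)) := F.epi_e _
    haveI : Epi (F.e (φ A)) := F.epi_e _
    haveI : Epi (F.e (hI.to A) ≫ F.e (φ A)) := epi_comp _ _
    rw [← cancel_epi (F.e (hI.to A) ≫ F.e (φ A))]
    exact hI.hom_ext _ _
  refine ⟨?_, ?_, ?_⟩
  · -- I ≅ Reach I
    have h1 : hI.to I = 𝟙 I := hI.hom_ext _ _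
    have hfac : F.e (hI.to I) ≫ F.m (hI.to I) = 𝟙 I := by rw [F.fac, h1]
    refine ⟨⟨F.e (hI.to I), F.m (hI.to I), hfac, ?_⟩⟩
    haveI : Epi (F.e (hI.to I)) := F.epi_e _
    rw [← cancel_epi (F.e (hI.to I)), ← Category.assoc, hfac,
      Category.id_comp, Category.comp_id]
  · obtain ⟨d, hd1, hd2⟩ := key I
    exact ⟨⟨d, F.m (φ I), hd1, hd2⟩⟩
  · intro A
    obtain ⟨d, hd1, hd2⟩ := key A
    refine ⟨⟨⟨d, F.m (φ A), hd1, hd2⟩⟩, F.img (hI.to A), F.m (hI.to A), φ A,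
      F.strong_m _, ?_⟩
    haveI : IsIso (F.m (φ A)) := ⟨d, hd2, hd1⟩
    haveI : Epi (F.e (φ A)) := F.epi_e _
    rw [← F.fac (φ A)]
    exact epi_comp _ _
end

section
/- If g is a greatest common divisor of a vector U of updates, then there is a strong factorization g = g' ∘ g'' with g' an epi greatest common divisor (EGCD) of U. -/
open CategoryTheory

/-- `g` is a divisor of `u` if `u = g ≫ v` for some residual `v`. -/
def Divides {C : Type*} [Category C] {A B X : C} (g : A ⟶ X) (u : A ⟶ B) : Prop :=
  ∃ v : X ⟶ B, g ≫ v = u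

/-- A common divisor of a vector `U` of updates: a divisor of every member. -/
def IsCommonDiv {C : Type*} [Category C] {ι : Type*} {A B X : C}
    (U : ι → (A ⟶ B)) (g : A ⟶ X) : Prop :=
  ∀ i, Divides g (U i)

/-- A greatest common divisor (GCD) of `U`: a common divisor that is divided by
every other common divisor. -/
def IsGCD {C : Type*} [Category C] {ι : Type*} {A B X : C}
    (U : ι → (A ⟶ B)) (g : A ⟶ X) : Prop :=
  IsCommonDiv U g ∧ ∀ {X' : C} (g' : A ⟶ X'), IsCommonDiv U g' → Divides g' g

/-- An epi greatest common divisor (EGCD) of `U`: an epi common divisor that is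
divided by every epi common divisor. -/
def IsEGCD {C : Type*} [Category C] {ι : Type*} {A B X : C}
    (U : ι → (A ⟶ B)) (g : A ⟶ X) : Prop :=
  Epi g ∧ IsCommonDiv U g ∧
    ∀ {X' : C} (g' : A ⟶ X'), Epi g' → IsCommonDiv U g' → Divides g' g

/-- If `g` is a greatest common divisor of a vector `U` of updates, then there
is a strong factorization `g = g' ≫ g''` of it, with `g'` an epi greatest common
divisor (EGCD) of `U`. -/
theorem gcd_strong_factorization_egcd {C : Type*} [Category C] {ι : Type*}
    {A B X : C} (U : ι → (A ⟶ B)) (g : A ⟶ X)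
    (hfac : ∀ {Y Z : C} (f : Y ⟶ Z),
      ∃ (W : C) (e : Y ⟶ W) (m : W ⟶ Z), Epi e ∧ StrongMonoP m ∧ e ≫ m = f)
    (hg : IsGCD U g) :
    ∃ (W : C) (g' : A ⟶ W) (g'' : W ⟶ X),
      Epi g' ∧ StrongMonoP g'' ∧ g' ≫ g'' = g ∧ IsEGCD U g' := by
  obtain ⟨W, e, m, he, hm, hem⟩ := hfac g
  refine ⟨W, e, m, he, hm, hem, he, ?_, ?_⟩
  · intro i
    obtain ⟨v, hv⟩ := hg.1 i
    exact ⟨m ≫ v, by rw [← Category.assoc, hem, hv]⟩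
  · intro X' g' hg'e hg'cd
    obtain ⟨w, hw⟩ := hg.2 g' hg'cd
    obtain ⟨d, ⟨hd1, hd2⟩, _⟩ := hm g' hg'e e w (by rw [hw, ← hem])
    exact ⟨d, hd1⟩
end

section
/- Distributivity of EGCDs: if U = g ∘ V componentwise for an epi g and a vector V of updates, and h is an EGCD of V, then g ∘ h is an EGCD of U. -/
open CategoryTheory

/-- Distributivity of EGCDs: if `U = g ≫ V` componentwise for an epi `g` and a
vector `V` of updates, and `h` is an EGCD of `V`, then `g ≫ h` is an EGCD of
`U`.  (EGCDs are assumed to exist for all vectors.) -/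
theorem egcd_distributivity {C : Type*} [Category C] {ι : Type*}
    (hex : ∀ {P Q : C} (W : ι → (P ⟶ Q)), ∃ (Z : C) (e : P ⟶ Z), IsEGCD W e)
    {A B X Y : C} (U : ι → (A ⟶ B)) (g : A ⟶ X) (V : ι → (X ⟶ B)) (h : X ⟶ Y)
    (hgepi : Epi g) (hUV : ∀ i, U i = g ≫ V i) (hh : IsEGCD V h) :
    IsEGCD U (g ≫ h) := by
  obtain ⟨hhepi, hhcd, hhmax⟩ := hh
  refine ⟨by exact epi_comp g h, ?_, ?_⟩
  · intro i
    obtain ⟨v, hv⟩ := hhcd i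
    exact ⟨v, by rw [Category.assoc, hv, hUV i]⟩
  · intro X' g' hg'epi hg'cd
    -- take an EGCD e of U
    obtain ⟨Z, e, heepi, hecd, hemax⟩ := hex U
    -- g is an epi common divisor of U
    have hgcd : IsCommonDiv U g := fun i => ⟨V i, (hUV i).symm⟩
    obtain ⟨w, hw⟩ := hemax g hgepi hgcd
    obtain ⟨w', hw'⟩ := hemax g' hg'epi hg'cd
    have hwepi : Epi w := by
      constructor
      intro T a b hab
      have : e ≫ a = e ≫ b := by rw [← hw, Category.assoc, Category.assoc, hab]
      exact (cancel_epi e).mp this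
    -- w is a common divisor of V
    have hwcd : IsCommonDiv V w := by
      intro i
      obtain ⟨r, hr⟩ := hecd i
      refine ⟨r, ?_⟩
      have : g ≫ w ≫ r = g ≫ V i := by
        rw [← Category.assoc, hw, hr, hUV i]
      exact (cancel_epi g).mp this
    obtain ⟨s, hs⟩ := hhmax w hwepi hwcd
    exact ⟨w' ≫ s, by rw [← Category.assoc, hw', ← hw, Category.assoc, hs]⟩
end

section
/- Right-invariance of EGCD residuals: given the Hankel matrix H of a transduction φ (H[s,t] = φ(st)), one can choose for every word s an EGCD D[s] of the row H[s,−] with residual vector R[s,−] = D[s]\H[s,−], and for every letter a an EGCD P_a[s] of the sub-vector R[s,a−] with R[sa,−] = P_a[s]\R[s,a−], such that D[sa] = D[s] ∘ P_a[s] for all s and a. -/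
open CategoryTheory

/-- `V` is the residual vector of the (partial) vector `U` via `g`:
`U[t] = g ≫ V[t]` whenever defined (`U` and `V` have the same defined entries). -/
def IsResid {C : Type*} [Category C] {A : Type*} {X Y B : C} (g : X ⟶ Y)
    (U : List A → Option (X ⟶ B)) (V : List A → Option (Y ⟶ B)) : Prop :=
  ∀ t, U t = (V t).map (fun v => g ≫ v)

/-- An epi common divisor of a partial vector `U`: an epi `g` through which `U`
factors. -/
def IsECD {C : Type*} [Category C] {A : Type*} {X Y B : C}
    (U : List A → Option (X ⟶ B)) (g : X ⟶ Y) : Prop :=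
  Epi g ∧ ∃ V : List A → Option (Y ⟶ B), IsResid g U V

/-- An epi greatest common divisor (EGCD) of a partial vector `U`: an epi common
divisor divided by every epi common divisor. -/
def IsEGCDv {C : Type*} [Category C] {A : Type*} {X Y B : C}
    (U : List A → Option (X ⟶ B)) (g : X ⟶ Y) : Prop :=
  IsECD U g ∧ ∀ {Y' : C} (g' : X ⟶ Y'), IsECD U g' → ∃ w : Y' ⟶ Y, g' ≫ w = g

section Aux

variable {C : Type*} [Category C] {A : Type*}

/-- Residuals compose along taking sub-vectors. -/
lemma resid_comp {X Y Z B : C} {U : List A → Option (X ⟶ B)}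
    {V : List A → Option (Y ⟶ B)} {W : List A → Option (Z ⟶ B)}
    {g : X ⟶ Y} {h : Y ⟶ Z} {a : A}
    (hgR : IsResid g U V) (hW : IsResid h (fun t => V (a :: t)) W) :
    IsResid (g ≫ h) (fun t => U (a :: t)) W := by
  intro t
  have e1 := hgR (a :: t)
  have e2 : V (a :: t) = Option.map (fun v => h ≫ v) (W t) := hW t
  show U (a :: t) = Option.map (fun v => (g ≫ h) ≫ v) (W t)
  rw [e1, e2, Option.map_map]
  simp [Function.comp_def]

/-- Composition of EGCDs: if `g` is an EGCD of `U` with residual `V`, and `h` is an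
EGCD of the sub-vector `V[a−]`, then `g ≫ h` is an EGCD of `U[a−]`. -/
lemma comp_egcd {X Y Z B : C} {U : List A → Option (X ⟶ B)}
    {V : List A → Option (Y ⟶ B)} {g : X ⟶ Y} {a : A} {h : Y ⟶ Z}
    (hgE : IsEGCDv U g) (hgR : IsResid g U V)
    (hhE : IsEGCDv (fun t => V (a :: t)) h)
    (hex : ∀ (X B : C) (U : List A → Option (X ⟶ B)),
      ∃ (Y : C) (g : X ⟶ Y), IsEGCDv U g) :
    IsEGCDv (fun t => U (a :: t)) (g ≫ h) := by
  obtain ⟨⟨hgEpi, _⟩, _⟩ := hgE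
  obtain ⟨⟨hhEpi, W, hW⟩, hhMax⟩ := hhE
  constructor
  · exact ⟨by exact epi_comp g h, W, resid_comp hgR hW⟩
  · intro Y' g' hg'
    -- take an EGCD `G` of the sub-vector `U[a−]`
    obtain ⟨Zg, G, ⟨⟨hGEpi, WG, hWG⟩, hGMax⟩⟩ := hex X B (fun t => U (a :: t))
    -- `g` is an ECD of `U[a−]`
    have hgECD : IsECD (fun t => U (a :: t)) g :=
      ⟨hgEpi, fun t => V (a :: t), fun t => hgR (a :: t)⟩
    obtain ⟨u, hu⟩ := hGMax g hgECD
    have hGuEpi : Epi (g ≫ u) := by rw [hu]; exact hGEpi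
    have huEpi : Epi u := @epi_of_epi _ _ _ _ _ g u hGuEpi
    -- `u` is an ECD of `V[a−]` with residual `WG`
    have huRes : IsResid u (fun t => V (a :: t)) WG := by
      intro t
      show V (a :: t) = Option.map (fun v => u ≫ v) (WG t)
      have e1 := hgR (a :: t)
      have e2 : U (a :: t) = Option.map (fun v => G ≫ v) (WG t) := hWG t
      rw [← hu] at e2
      cases hwg : WG t with
      | none =>
        rw [hwg] at e2
        simp only [Option.map_none] at e2
        rw [e2] at e1
        cases hv : V (a :: t) with
        | none => simp
        | some v => rw [hv] at e1; simp at e1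
      | some w =>
        rw [hwg] at e2
        simp only [Option.map_some] at e2
        rw [e2] at e1
        cases hv : V (a :: t) with
        | none => rw [hv] at e1; simp at e1
        | some v =>
          rw [hv] at e1
          simp only [Option.map_some, Option.some.injEq, Category.assoc] at e1
          have := hgEpi.left_cancellation v (u ≫ w) e1.symm
          simp [this]
    obtain ⟨w, hw⟩ := hhMax u ⟨huEpi, WG, huRes⟩
    obtain ⟨v, hv⟩ := hGMax g' hg'
    refine ⟨v ≫ w, ?_⟩
    rw [← Category.assoc, hv, ← hu, Category.assoc, hw]

variable (C A) in
/-- A node: an object with a morphism from `I₀` and a partial vector to `F₀`. -/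
structure HNode (I₀ F₀ : C) where
  Y : C
  g : I₀ ⟶ Y
  R : List A → Option (Y ⟶ F₀)

variable {I₀ F₀ : C}
variable (hex : ∀ (X B : C) (U : List A → Option (X ⟶ B)),
      ∃ (Y : C) (g : X ⟶ Y), IsEGCDv U g)

/-- Chosen EGCD codomain. -/
noncomputable def eY {X B : C} (U : List A → Option (X ⟶ B)) : C := (hex X B U).choose

/-- Chosen EGCD morphism. -/
noncomputable def eg {X B : C} (U : List A → Option (X ⟶ B)) : X ⟶ eY hex U :=
  (hex X B U).choose_spec.choose

lemma espec {X B : C} (U : List A → Option (X ⟶ B)) : IsEGCDv U (eg hex U) :=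
  (hex X B U).choose_spec.choose_spec

/-- Chosen residual of the chosen EGCD. -/
noncomputable def eRes {X B : C} (U : List A → Option (X ⟶ B)) :
    List A → Option (eY hex U ⟶ B) :=
  (espec hex U).1.2.choose

lemma eResSpec {X B : C} (U : List A → Option (X ⟶ B)) :
    IsResid (eg hex U) U (eRes hex U) :=
  (espec hex U).1.2.choose_spec

variable (φ : List A → Option (I₀ ⟶ F₀))

/-- The base node, for the empty word. -/
noncomputable def baseNode : HNode C A I₀ F₀ :=
  ⟨eY hex φ, eg hex φ, eRes hex φ⟩

/-- One step: extend a node by a letter `a`. -/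
noncomputable def Fstep (a : A) (n : HNode C A I₀ F₀) : HNode C A I₀ F₀ :=
  ⟨eY hex (fun t => n.R (a :: t)), n.g ≫ eg hex (fun t => n.R (a :: t)),
    eRes hex (fun t => n.R (a :: t))⟩

/-- The node assigned to each word, by recursion from the right. -/
noncomputable def auxN (s : List A) : HNode C A I₀ F₀ :=
  s.reverseRecOn (baseNode hex φ) (fun _ a n => Fstep hex a n)

lemma auxN_concat (s : List A) (a : A) :
    auxN hex φ (s ++ [a]) = Fstep hex a (auxN hex φ s) := by
  unfold auxN; exact List.reverseRecOn_concat a s _ _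

/-- The morphism of one step, typed with `Fstep`. -/
noncomputable def Pmor (a : A) (n : HNode C A I₀ F₀) : n.Y ⟶ (Fstep hex a n).Y :=
  eg hex (fun t => n.R (a :: t))

/-- The invariant carried by the nodes. -/
def NodeP (s : List A) (n : HNode C A I₀ F₀) : Prop :=
  IsEGCDv (fun t => φ (s ++ t)) n.g ∧ IsResid n.g (fun t => φ (s ++ t)) n.R

lemma rowrw (s : List A) (a : A) :
    (fun t => φ ((s ++ [a]) ++ t)) = fun t => φ (s ++ (a :: t)) := by
  funext t; simp

lemma stepP (s : List A) (a : A) (n : HNode C A I₀ F₀) (hn : NodeP φ s n) :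
    NodeP φ (s ++ [a]) (Fstep hex a n) := by
  obtain ⟨hE, hR⟩ := hn
  constructor
  · show IsEGCDv (fun t => φ ((s ++ [a]) ++ t)) (n.g ≫ eg hex (fun t => n.R (a :: t)))
    rw [rowrw]
    exact comp_egcd hE hR (espec hex _) hex
  · show IsResid _ (fun t => φ ((s ++ [a]) ++ t)) _
    rw [rowrw]
    exact resid_comp hR (eResSpec hex _)

lemma auxNP (s : List A) : NodeP φ s (auxN hex φ s) := by
  induction s using List.reverseRecOn with
  | nil =>
    show NodeP φ [] (auxN hex φ [])
    unfold auxN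
    rw [List.reverseRecOn_nil]
    exact ⟨espec hex φ, eResSpec hex φ⟩
  | append_singleton l a ih =>
    rw [auxN_concat]
    exact stepP hex φ l a _ ih

/-- The chosen transition morphism. -/
noncomputable def Pfull (a : A) (s : List A) :
    (auxN hex φ s).Y ⟶ (auxN hex φ (s ++ [a])).Y :=
  (auxN_concat hex φ s a).symm ▸ Pmor hex a (auxN hex φ s)

lemma trans_props (s : List A) (a : A) :
    ∀ (n : HNode C A I₀ F₀) (e : Fstep hex a (auxN hex φ s) = n),
      (IsEGCDv (fun t => (auxN hex φ s).R (a :: t)) (e ▸ Pmor hex a (auxN hex φ s)) ∧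
        IsResid (e ▸ Pmor hex a (auxN hex φ s))
          (fun t => (auxN hex φ s).R (a :: t)) n.R) ∧
      n.g = (auxN hex φ s).g ≫ (e ▸ Pmor hex a (auxN hex φ s)) := by
  rintro n rfl
  refine ⟨⟨espec hex _, eResSpec hex _⟩, rfl⟩

end Aux

/-- Right-invariance of EGCD residuals: given the Hankel matrix `H[s,t] = φ(st)`
of a transduction `φ` (whose values are updates from the initial domain `I₀` to
the final domain `F₀`), one can choose, for every word `s`, an EGCD `Dv s` of
the row `H[s,−]` with residual vector `R s = Dv s \ H[s,−]`, and for every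
letter `a` an EGCD `P a s` of the sub-vector `R[s,a−]` with
`R (s++[a]) = P a s \ R[s,a−]`, such that `Dv (s++[a]) = Dv s ≫ P a s`. -/
theorem hankel_right_invariance {C : Type*} [Category C] {A : Type*}
    (I₀ F₀ : C) (φ : List A → Option (I₀ ⟶ F₀))
    (hex : ∀ (X B : C) (U : List A → Option (X ⟶ B)),
      ∃ (Y : C) (g : X ⟶ Y), IsEGCDv U g) :
    ∃ (Xo : List A → C) (Dv : ∀ s : List A, I₀ ⟶ Xo s)
      (R : ∀ s : List A, List A → Option (Xo s ⟶ F₀))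
      (P : ∀ (a : A) (s : List A), Xo s ⟶ Xo (s ++ [a])),
      (∀ s, IsEGCDv (fun t => φ (s ++ t)) (Dv s) ∧
            IsResid (Dv s) (fun t => φ (s ++ t)) (R s)) ∧
      (∀ s a, IsEGCDv (fun t => R s (a :: t)) (P a s) ∧
              IsResid (P a s) (fun t => R s (a :: t)) (R (s ++ [a]))) ∧
      (∀ s a, Dv (s ++ [a]) = Dv s ≫ P a s) := by
  refine ⟨fun s => (auxN hex φ s).Y, fun s => (auxN hex φ s).g,
    fun s => (auxN hex φ s).R,
    fun a s => Pfull hex φ a s,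
    ?_, ?_, ?_⟩
  · intro s
    exact ⟨(auxNP hex φ s).1, (auxNP hex φ s).2⟩
  · intro s a
    exact (trans_props hex φ s a _ (auxN_concat hex φ s a).symm).1
  · intro s a
    exact (trans_props hex φ s a _ (auxN_concat hex φ s a).symm).2
end

section
/- Finite sets of terms admit least general generalizations (anti-unifiers): for every finite nonempty set S of terms over a ranked alphabet, there exists a term g over variables such that (1) every t ∈ S is an instance of g (i.e., t = g[σ_t] for some substitution σ_t of the variables by ground terms), and (2) for every other term g' of which all members of S are instances, g is an instance of g'. Moreover this anti-unifier is unique up to renaming of variables. -/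
/-- Terms over a ranked alphabet `Γ` (with arity function `ar`) and variables `V`. -/
inductive Tm (Γ : Type) (ar : Γ → ℕ) (V : Type) : Type where
  | var : V → Tm Γ ar V
  | node : (a : Γ) → (Fin (ar a) → Tm Γ ar V) → Tm Γ ar V

/-- Simultaneous first-order substitution of the variables of a term. -/
def Tm.subst {Γ : Type} {ar : Γ → ℕ} {V W : Type} (σ : V → Tm Γ ar W) :
    Tm Γ ar V → Tm Γ ar W
  | .var x => σ x
  | .node a ts => .node a fun i => (ts i).subst σ

namespace AU

variable {Γ : Type} {ar : Γ → ℕ} {V W X ι : Type}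

theorem subst_subst (σ : V → Tm Γ ar W) (τ : W → Tm Γ ar X) (t : Tm Γ ar V) :
    (t.subst σ).subst τ = t.subst (fun x => (σ x).subst τ) := by
  induction t with
  | var x => simp [Tm.subst]
  | node a ts ih => simp [Tm.subst]; funext i; exact ih i

def vars : Tm Γ ar V → List V
  | .var x => [x]
  | .node _ ts => (List.ofFn fun i => vars (ts i)).flatten

theorem mem_vars_node {a : Γ} {ts : Fin (ar a) → Tm Γ ar V} {x : V} :
    x ∈ vars (.node a ts) ↔ ∃ i, x ∈ vars (ts i) := by
  simp [vars, List.mem_flatten, List.mem_ofFn]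

theorem subst_congr {σ τ : V → Tm Γ ar W} {t : Tm Γ ar V}
    (h : ∀ x ∈ vars t, σ x = τ x) : t.subst σ = t.subst τ := by
  induction t with
  | var x => simpa [Tm.subst] using h x (by simp [vars])
  | node a ts ih =>
    simp only [Tm.subst, Tm.node.injEq, heq_eq_eq, true_and]
    funext i
    exact ih i (fun x hx => h x (mem_vars_node.2 ⟨i, hx⟩))

theorem subst_eq_self {μ : V → Tm Γ ar V} {t : Tm Γ ar V}
    (h : t.subst μ = t) : ∀ x ∈ vars t, μ x = .var x := by
  induction t with
  | var x => intro y hy; simp [vars] at hy; subst hy; simpa [Tm.subst] using h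
  | node a ts ih =>
    intro x hx
    rcases mem_vars_node.1 hx with ⟨i, hx⟩
    simp only [Tm.subst, Tm.node.injEq, heq_eq_eq, true_and] at h
    exact ih i (congrFun h i) x hx

def depth : Tm Γ ar V → ℕ
  | .var _ => 0
  | .node _ ts => Finset.univ.sup (fun i => depth (ts i)) + 1

theorem depth_child_lt {a : Γ} {ts : Fin (ar a) → Tm Γ ar V} (i : Fin (ar a)) :
    depth (ts i) < depth (.node a ts) :=
  Nat.lt_succ_of_le (Finset.le_sup (f := fun i => depth (ts i)) (Finset.mem_univ i))

theorem one_le_depth (t : Tm Γ ar Empty) : 1 ≤ depth t := by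
  cases t with
  | var x => exact x.elim
  | node a ts => simp [depth]

open scoped Classical in
noncomputable def lgg (n : ℕ) (f : ι → Tm Γ ar Empty) :
    Tm Γ ar (ι → Tm Γ ar Empty) :=
  match n with
  | 0 => .var f
  | n+1 =>
    if h : ∃ a : Γ, ∃ us : ι → Fin (ar a) → Tm Γ ar Empty,
        ∀ s, f s = .node a (us s) then
      .node h.choose (fun i => lgg n (fun s => h.choose_spec.choose s i))
    else .var f

theorem lgg_node (s₀ : ι) {n : ℕ} {f : ι → Tm Γ ar Empty} {a : Γ}
    {us : ι → Fin (ar a) → Tm Γ ar Empty} (hf : ∀ s, f s = .node a (us s)) :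
    lgg (n+1) f = .node a (fun i => lgg n (fun s => us s i)) := by
  have h : ∃ a : Γ, ∃ us : ι → Fin (ar a) → Tm Γ ar Empty,
      ∀ s, f s = .node a (us s) := ⟨a, us, hf⟩
  have hab : h.choose = a := by
    have h1 := h.choose_spec.choose_spec s₀
    have h2 := hf s₀
    rw [h1] at h2
    injection h2
  simp only [lgg, dif_pos h]
  subst hab
  have hus : ∀ s, h.choose_spec.choose s = us s := by
    intro s
    have h1 := h.choose_spec.choose_spec s
    have h2 := hf s
    rw [h1] at h2
    have h4 : HEq (Exists.choose_spec h |>.choose s) (us s) := by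
      have := Tm.node.inj h2
      exact this.2
    exact eq_of_heq h4
  congr 1
  funext i
  congr 1
  funext s
  rw [hus s]

theorem lgg_sound (n : ℕ) (f : ι → Tm Γ ar Empty) (s : ι) :
    (lgg n f).subst (fun v => v s) = f s := by
  induction n generalizing f with
  | zero => simp [lgg, Tm.subst]
  | succ n ih =>
    by_cases h : ∃ a : Γ, ∃ us : ι → Fin (ar a) → Tm Γ ar Empty,
        ∀ s, f s = .node a (us s)
    · obtain ⟨a, us, hf⟩ := h
      rw [lgg_node s hf]
      simp only [Tm.subst]
      rw [hf s]
      congr 1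
      funext i
      exact ih (fun s => us s i)
    · simp [lgg, dif_neg h, Tm.subst]

theorem lgg_stable (s₀ : ι) : ∀ (n m : ℕ) (f : ι → Tm Γ ar Empty),
    (∀ s, depth (f s) ≤ n) → (∀ s, depth (f s) ≤ m) → lgg n f = lgg m f := by
  intro n
  induction n with
  | zero =>
    intro m f hn _
    exact absurd (le_trans (one_le_depth (f s₀)) (hn s₀)) (by simp)
  | succ n ih =>
    intro m f hn hm
    match m with
    | 0 => exact absurd (le_trans (one_le_depth (f s₀)) (hm s₀)) (by simp)
    | m+1 =>
      by_cases h : ∃ a : Γ, ∃ us : ι → Fin (ar a) → Tm Γ ar Empty,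
          ∀ s, f s = .node a (us s)
      · obtain ⟨a, us, hf⟩ := h
        rw [lgg_node s₀ hf, lgg_node s₀ hf]
        congr 1
        funext i
        exact ih m (fun s => us s i)
          (fun s => by
            have := depth_child_lt (ts := us s) i
            rw [← hf s] at this
            have h2 := hn s; show depth (us s i) ≤ n; omega)
          (fun s => by
            have := depth_child_lt (ts := us s) i
            rw [← hf s] at this
            show depth (us s i) ≤ m
            exact Nat.lt_succ_iff.1 (lt_of_lt_of_le this (hm s)))
      · simp only [lgg, dif_neg h]

theorem lgg_least (s₀ : ι) (N : ℕ) (g' : Tm Γ ar ℕ) (σ : ι → ℕ → Tm Γ ar Empty) :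
    ∀ (m : ℕ) (f : ι → Tm Γ ar Empty), m ≤ N →
    (∀ s, g'.subst (σ s) = f s) → (∀ s, depth (f s) ≤ m) →
    g'.subst (fun y => lgg N (fun s => σ s y)) = lgg m f := by
  induction g' with
  | var y =>
    intro m f hmN hg hd
    have hf : f = fun s => σ s y := by funext s; rw [← hg s]; rfl
    subst hf
    simp only [Tm.subst]
    exact lgg_stable s₀ N m _ (fun s => le_trans (hd s) hmN) hd
  | node a ts ih =>
    intro m f hmN hg hd
    have hf : ∀ s, f s = .node a (fun i => (ts i).subst (σ s)) := by
      intro s; rw [← hg s]; rfl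
    match m with
    | 0 => exact absurd (le_trans (one_le_depth (f s₀)) (hd s₀)) (by simp)
    | m+1 =>
      rw [lgg_node s₀ hf]
      simp only [Tm.subst]
      congr 1
      funext i
      exact ih i m (fun s => (ts i).subst (σ s)) (by omega) (fun s => rfl)
        (fun s => by
          have := depth_child_lt (ts := fun i => (ts i).subst (σ s)) i
          rw [← hf s] at this
          show depth ((ts i).subst (σ s)) ≤ m
          exact Nat.lt_succ_iff.1 (lt_of_lt_of_le this (hd s)))

end AU

/-- A term `g` over variables generalizes a ground term `t` if `t` is an
instance of `g`, i.e. `t = g[σ]` for some substitution `σ` of the variables by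
ground terms. -/
def Generalizes {Γ : Type} {ar : Γ → ℕ} (g : Tm Γ ar ℕ) (t : Tm Γ ar Empty) :
    Prop :=
  ∃ σ : ℕ → Tm Γ ar Empty, g.subst σ = t

/-- Finite nonempty sets of terms admit least general generalizations
(anti-unifiers): there is a term `g` generalizing every member of `S`, such that
`g` is an instance of every common generalization `g'` of `S`; moreover such an
anti-unifier is unique up to renaming of variables. -/
theorem anti_unifier_exists {Γ : Type} {ar : Γ → ℕ}
    (S : Finset (Tm Γ ar Empty)) (hS : S.Nonempty) :
    ∃ g : Tm Γ ar ℕ,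
      (∀ t ∈ S, Generalizes g t) ∧
      (∀ g' : Tm Γ ar ℕ, (∀ t ∈ S, Generalizes g' t) →
        ∃ σ : ℕ → Tm Γ ar ℕ, g'.subst σ = g) ∧
      (∀ g₂ : Tm Γ ar ℕ,
        ((∀ t ∈ S, Generalizes g₂ t) ∧
         (∀ g' : Tm Γ ar ℕ, (∀ t ∈ S, Generalizes g' t) →
           ∃ σ : ℕ → Tm Γ ar ℕ, g'.subst σ = g₂)) →
        ∃ ρ : ℕ → ℕ, g₂.subst (fun x => Tm.var (ρ x)) = g) := by
  classical
  obtain ⟨t₀, ht₀⟩ := hS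
  set f₀ : ↥S → Tm Γ ar Empty := fun s => s.val with hf₀
  set s₀ : ↥S := ⟨t₀, ht₀⟩ with hs₀
  set N : ℕ := S.sup AU.depth with hNdef
  have hN : ∀ s : ↥S, AU.depth (f₀ s) ≤ N := fun s => Finset.le_sup s.2
  set L : Tm Γ ar (↥S → Tm Γ ar Empty) := AU.lgg N f₀ with hL
  set l : List (↥S → Tm Γ ar Empty) := AU.vars L with hl
  set ρ : (↥S → Tm Γ ar Empty) → ℕ := fun v => l.idxOf v with hρ
  set ιv : ℕ → (↥S → Tm Γ ar Empty) := fun n => l.getD n (fun _ => t₀) with hιv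
  have hinv : ∀ v ∈ l, ιv (ρ v) = v := by
    intro v hv
    have h1 : l.idxOf v < l.length := List.idxOf_lt_length_iff.2 hv
    rw [hιv, hρ]
    simp only
    rw [List.getD_eq_getElem _ _ h1, List.getElem_idxOf h1]
  set g : Tm Γ ar ℕ := L.subst (fun v => .var (ρ v)) with hg
  have hP1 : ∀ t ∈ S, Generalizes g t := by
    intro t ht
    refine ⟨fun n => (ιv n) ⟨t, ht⟩, ?_⟩
    rw [hg, AU.subst_subst]
    have heq : L.subst (fun x =>
        (Tm.var (ρ x)).subst (fun n => (ιv n) ⟨t, ht⟩)) =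
        L.subst (fun v => v ⟨t, ht⟩) := by
      apply AU.subst_congr
      intro v hv
      show (ιv (ρ v)) ⟨t, ht⟩ = v ⟨t, ht⟩
      rw [hinv v hv]
    rw [heq, hL, AU.lgg_sound]
  have hP2 : ∀ g' : Tm Γ ar ℕ, (∀ t ∈ S, Generalizes g' t) →
      ∃ σ : ℕ → Tm Γ ar ℕ, g'.subst σ = g := by
    intro g' hg'
    choose σ hσ using fun s : ↥S => hg' s.1 s.2
    have hle := AU.lgg_least s₀ N g' σ N f₀ le_rfl (fun s => hσ s) hN
    refine ⟨fun y => (AU.lgg N (fun s => σ s y)).subst (fun v => .var (ρ v)), ?_⟩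
    rw [← AU.subst_subst, hle, ← hL, ← hg]
  refine ⟨g, hP1, hP2, ?_⟩
  intro g₂ ⟨hgen, hleast⟩
  obtain ⟨τ, hτ⟩ := hP2 g₂ hgen
  obtain ⟨υ, hυ⟩ := hleast g hP1
  have hid : g₂.subst (fun x => (τ x).subst υ) = g₂ := by
    rw [← AU.subst_subst, hτ, hυ]
  have hv := AU.subst_eq_self hid
  refine ⟨fun x => match τ x with | .var y => y | _ => 0, ?_⟩
  have hcg : g₂.subst (fun x => Tm.var
      (match τ x with | .var y => y | _ => 0)) = g₂.subst τ := by
    apply AU.subst_congr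
    intro x hx
    have h1 := hv x hx
    cases h' : τ x with
    | var y => rfl
    | node a ts =>
      rw [h'] at h1
      simp [Tm.subst] at h1
  rw [hcg, hτ]
end

section
/- Characterization of the divisor relation for copyless non-erasing term updates via subterm embeddings: the update represented by a multiset S of terms divides the update represented by a multiset T if and only if there is a function e mapping each element s ∈ S to an occurrence of s as a subterm inside T such that (1) the images of e are pairwise disjoint occurrences (no image is contained in another), and (2) the images of e cover all variable occurrences appearing in T. -/
/-- The list of variable occurrences of a term, from left to right. -/
def Tm.varList {Γ : Type} {ar : Γ → ℕ} {V : Type} : Tm Γ ar V → List V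
  | .var x => [x]
  | .node _ ts => (List.ofFn fun i => (ts i).varList).flatten

/-- The subterm of `t` at a position (a path given by child indices), if any. -/
def subtermAt {Γ : Type} {ar : Γ → ℕ} {V : Type} :
    Tm Γ ar V → List ℕ → Option (Tm Γ ar V)
  | t, [] => some t
  | .var _, _ :: _ => none
  | .node a ts, i :: p => if h : i < ar a then subtermAt (ts ⟨i, h⟩) p else none

/-- A list of terms represents a copyless non-erasing update out of type `α` if
each of the `α` variables occurs exactly once in total (order is immaterial,
as such lists represent multisets). -/
def IsCNE {Γ : Type} {ar : Γ → ℕ} (α : ℕ) (S : List (Tm Γ ar (Fin α))) : Prop :=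
  ((S.map Tm.varList).flatten).Perm (List.finRange α)

/-- The update represented by the multiset `S` divides the update represented by
`T` : `T = S ∘ W` (up to permutation of components, i.e. as multisets) for some
copyless non-erasing update `W`. -/
def DividesCNE {Γ : Type} {ar : Γ → ℕ} {α : ℕ}
    (S T : List (Tm Γ ar (Fin α))) : Prop :=
  ∃ W : List (Tm Γ ar (Fin S.length)),
    IsCNE S.length W ∧
    T.Perm (W.map (Tm.subst fun i => S.get i))


variable {Γ : Type} {ar : Γ → ℕ} {V W : Type}

theorem subtermAt_append (t : Tm Γ ar V) (q r : List ℕ) :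
    subtermAt t (q ++ r) = (subtermAt t q).bind (fun u => subtermAt u r) := by
  induction q generalizing t with
  | nil => simp [subtermAt]
  | cons i q ih =>
    cases t with
    | var x => simp [subtermAt]
    | node a ts =>
      simp only [List.cons_append, subtermAt]
      split
      · exact ih _
      · simp

theorem subtermAt_subst {σ : V → Tm Γ ar W} {t u : Tm Γ ar V} {q : List ℕ}
    (h : subtermAt t q = some u) : subtermAt (t.subst σ) q = some (u.subst σ) := by
  induction q generalizing t with
  | nil => simp [subtermAt] at h ⊢; subst h; rfl
  | cons i q ih =>
    cases t with
    | var x => simp [subtermAt] at h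
    | node a ts =>
      simp only [subtermAt, Tm.subst] at h ⊢
      split at h
      · rw [dif_pos ‹_›]; exact ih h
      · simp at h

theorem subst_var_decomp {σ : V → Tm Γ ar W} {t : Tm Γ ar V} {q : List ℕ} {x : W}
    (h : subtermAt (t.subst σ) q = some (Tm.var x)) :
    ∃ (q₁ q₂ : List ℕ) (y : V), q = q₁ ++ q₂ ∧ subtermAt t q₁ = some (Tm.var y) ∧
      subtermAt (σ y) q₂ = some (Tm.var x) := by
  induction t generalizing q with
  | var y => exact ⟨[], q, y, rfl, rfl, h⟩
  | node a ts ih =>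
    cases q with
    | nil =>
      simp only [Tm.subst, subtermAt, Option.some.injEq] at h
      exact absurd h (by simp)
    | cons i q =>
      simp only [Tm.subst, subtermAt] at h
      split at h
      next hlt =>
        obtain ⟨q₁, q₂, y, rfl, h1, h2⟩ := ih _ h
        exact ⟨i :: q₁, q₂, y, rfl, by simp [subtermAt, dif_pos hlt, h1], h2⟩
      next => simp at h


variable {Γ : Type} {ar : Γ → ℕ} {V W : Type}

/-- The list of positions at which variable `x` occurs in `t`. -/
def occs [DecidableEq V] (t : Tm Γ ar V) (x : V) : List (List ℕ) :=
  match t with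
  | .var y => if y = x then [[]] else []
  | .node a ts => (List.ofFn fun i : Fin (ar a) => (occs (ts i) x).map (List.cons i.1)).flatten

theorem mem_occs [DecidableEq V] {t : Tm Γ ar V} {x : V} {q : List ℕ} :
    q ∈ occs t x ↔ subtermAt t q = some (Tm.var x) := by
  induction t generalizing q with
  | var y =>
    cases q with
    | nil =>
      simp only [occs, subtermAt, Option.some.injEq]
      constructor
      · intro h; split at h <;> simp_all [Tm.var.injEq]
      · intro h; cases h; simp
    | cons i q => simp only [occs, subtermAt]; split <;> simp
  | node a ts ih =>
    simp only [occs, List.mem_flatten, List.mem_ofFn]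
    constructor
    · rintro ⟨l, ⟨i, rfl⟩, hq⟩
      simp only [List.mem_map] at hq
      obtain ⟨q', hq', rfl⟩ := hq
      simp [subtermAt, i.isLt, (ih i).mp hq']
    · intro h
      cases q with
      | nil =>
        simp only [subtermAt, Option.some.injEq] at h
        exact absurd h (by simp)
      | cons i q =>
        simp only [subtermAt] at h
        split at h
        next hlt =>
          exact ⟨(occs (ts ⟨i, hlt⟩) x).map (List.cons i), ⟨⟨i, hlt⟩, rfl⟩,
            List.mem_map.mpr ⟨q, (ih _).mpr h, rfl⟩⟩
        next => simp at h

theorem nodup_occs [DecidableEq V] (t : Tm Γ ar V) (x : V) : (occs t x).Nodup := by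
  induction t with
  | var y => simp only [occs]; split <;> simp
  | node a ts ih =>
    rw [occs, List.nodup_flatten]
    constructor
    · intro l hl
      simp only [List.mem_ofFn] at hl
      obtain ⟨i, rfl⟩ := hl
      exact (ih i).map (fun a b h => by injection h)
    · rw [List.pairwise_iff_get]
      intro i i' hii'
      simp only [List.get_ofFn]
      intro q hq hq'
      simp only [List.mem_map] at hq hq'
      obtain ⟨q1, -, rfl⟩ := hq
      obtain ⟨q2, -, h2⟩ := hq'
      have : (Fin.cast (by simp) i : Fin (ar a)).1 = (Fin.cast (by simp) i' : Fin (ar a)).1 := by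
        injection h2.symm
      simp only [Fin.coe_cast] at this
      exact absurd (Fin.ext this) hii'.ne

theorem length_occs [DecidableEq V] (t : Tm Γ ar V) (x : V) :
    (occs t x).length = t.varList.count x := by
  induction t with
  | var y => simp only [occs, Tm.varList]; split <;> simp_all [List.count_singleton]
  | node a ts ih =>
    simp only [occs, Tm.varList, List.count_flatten, List.length_flatten, List.map_ofFn,
      List.sum_ofFn]
    congr 1
    funext i
    simp [ih i]

theorem exists_occ_of_mem_varList [DecidableEq V] {t : Tm Γ ar V} {x : V}
    (h : x ∈ t.varList) : ∃ q, subtermAt t q = some (Tm.var x) := by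
  have : 0 < (occs t x).length := by
    rw [length_occs]; exact List.count_pos_iff.mpr h
  obtain ⟨q, hq⟩ := List.exists_mem_of_length_pos this
  exact ⟨q, mem_occs.mp hq⟩

theorem mem_varList_of_occ [DecidableEq V] {t : Tm Γ ar V} {x : V} {q : List ℕ}
    (h : subtermAt t q = some (Tm.var x)) : x ∈ t.varList := by
  have := mem_occs.mpr h
  rw [← List.count_pos_iff, ← length_occs]
  exact List.length_pos_of_mem this

theorem occs_eq_singleton [DecidableEq V] {t : Tm Γ ar V} {x : V}
    (h1 : t.varList.count x = 1) {q : List ℕ} (hq : subtermAt t q = some (Tm.var x)) :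
    occs t x = [q] := by
  have hnd := nodup_occs t x
  have hlen : (occs t x).length = 1 := by rw [length_occs]; exact h1
  obtain ⟨b, hb⟩ := List.length_eq_one_iff.mp hlen
  rw [hb] at hnd ⊢
  have : q ∈ [b] := by rw [← hb]; exact mem_occs.mpr hq
  simp at this; simp [this]


variable {Γ : Type} {ar : Γ → ℕ} {V W : Type}

/-- Prune a term: cut at every position in the domain of `g`, replacing the subterm
there by the corresponding variable.  Fails if some variable leaf is not cut. -/
def prune? : Tm Γ ar V → (List ℕ → Option W) → Option (Tm Γ ar W)
  | .var _, g => (g []).map Tm.var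
  | .node a ts, g =>
    match g [] with
    | some w => some (.var w)
    | none =>
      if h : ∀ i : Fin (ar a), (prune? (ts i) (fun q => g (i.1 :: q))).isSome then
        some (.node a fun i => (prune? (ts i) (fun q => g (i.1 :: q))).get (h i))
      else none

theorem prune?_node_cut {g : List ℕ → Option W} {w : W} (a : Γ) (ts : Fin (ar a) → Tm Γ ar V)
    (h : g [] = some w) : prune? (.node a ts) g = some (.var w) := by
  rw [prune?, h]

theorem isSome_prune?_node {g : List ℕ → Option W} {a : Γ} {ts : Fin (ar a) → Tm Γ ar V}
    (h : g [] = none) :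
    (prune? (.node a ts) g).isSome ↔
      ∀ i : Fin (ar a), (prune? (ts i) (fun q => g (i.1 :: q))).isSome := by
  rw [prune?, h]
  split
  next h' => simpa using h'
  next h' => simpa using h'

theorem prune?_node_eq {g : List ℕ → Option W} {a : Γ} {ts : Fin (ar a) → Tm Γ ar V}
    (h : g [] = none)
    (hall : ∀ i : Fin (ar a), (prune? (ts i) (fun q => g (i.1 :: q))).isSome) :
    prune? (.node a ts) g =
      some (.node a fun i => (prune? (ts i) (fun q => g (i.1 :: q))).get (hall i)) := by
  rw [prune?, h, dif_pos hall]

theorem prune?_isSome {t : Tm Γ ar V} {g : List ℕ → Option W}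
    (cover : ∀ q x, subtermAt t q = some (Tm.var x) → ∃ q', q' <+: q ∧ (g q').isSome) :
    (prune? t g).isSome := by
  induction t generalizing g with
  | var x =>
    obtain ⟨q', hpre, hs⟩ := cover [] x rfl
    rw [List.prefix_nil] at hpre
    subst hpre
    rw [prune?]
    simpa using hs
  | node a ts ih =>
    cases hg : g [] with
    | some w => rw [prune?_node_cut _ _ hg]; rfl
    | none =>
      rw [isSome_prune?_node hg]
      intro i
      apply ih
      intro q x hq
      obtain ⟨q', hpre, hs⟩ := cover (i.1 :: q) x (by
        simp only [subtermAt, i.isLt, dif_pos, Fin.eta]; exact hq)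
      cases q' with
      | nil => rw [hg] at hs; simp at hs
      | cons j q'' =>
        obtain ⟨rfl, hpre'⟩ := List.cons_prefix_cons.mp hpre
        exact ⟨q'', hpre', hs⟩

theorem subst_prune? {σ : W → Tm Γ ar V} {t : Tm Γ ar V} {g : List ℕ → Option W}
    {w : Tm Γ ar W} (hw : prune? t g = some w)
    (hσ : ∀ q y, g q = some y → subtermAt t q = some (σ y)) :
    w.subst σ = t := by
  induction t generalizing g w with
  | var x =>
    rw [prune?] at hw
    obtain ⟨y, hy, rfl⟩ := Option.map_eq_some_iff.mp hw
    have := hσ [] y hy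
    simp only [subtermAt, Option.some.injEq] at this
    simp [Tm.subst, ← this]
  | node a ts ih =>
    cases hg : g [] with
    | some y =>
      rw [prune?_node_cut _ _ hg] at hw
      cases hw
      have := hσ [] y hg
      simp only [subtermAt, Option.some.injEq] at this
      simp [Tm.subst, ← this]
    | none =>
      have hall : ∀ i : Fin (ar a), (prune? (ts i) (fun q => g (i.1 :: q))).isSome := by
        rw [← isSome_prune?_node hg, hw]; rfl
      rw [prune?_node_eq hg hall] at hw
      cases hw
      rw [Tm.subst]
      congr 1
      funext i
      apply ih i (Option.some_get (hall i)).symm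
      intro q y hy
      have := hσ (i.1 :: q) y hy
      simpa only [subtermAt, i.isLt, dif_pos, Fin.eta] using this

theorem prune?_var_back {t : Tm Γ ar V} {g : List ℕ → Option W} {w : Tm Γ ar W}
    {q : List ℕ} {y : W} (hw : prune? t g = some w)
    (hq : subtermAt w q = some (Tm.var y)) : g q = some y := by
  induction t generalizing g w q with
  | var x =>
    rw [prune?] at hw
    obtain ⟨y', hy', rfl⟩ := Option.map_eq_some_iff.mp hw
    cases q with
    | nil =>
      simp only [subtermAt, Option.some.injEq] at hq
      cases hq; exact hy'
    | cons i q => simp [subtermAt] at hq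
  | node a ts ih =>
    cases hg : g [] with
    | some y' =>
      rw [prune?_node_cut _ _ hg] at hw
      cases hw
      cases q with
      | nil =>
        simp only [subtermAt, Option.some.injEq] at hq
        cases hq; exact hg
      | cons i q => simp [subtermAt] at hq
    | none =>
      have hall : ∀ i : Fin (ar a), (prune? (ts i) (fun q => g (i.1 :: q))).isSome := by
        rw [← isSome_prune?_node hg, hw]; rfl
      rw [prune?_node_eq hg hall] at hw
      cases hw
      cases q with
      | nil =>
        simp only [subtermAt, Option.some.injEq] at hq
        exact absurd hq (by simp)
      | cons i q =>
        simp only [subtermAt] at hq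
        split at hq
        next hlt =>
          exact ih ⟨i, hlt⟩ (g := fun q => g (i :: q)) (Option.some_get (hall ⟨i, hlt⟩)).symm hq
        next => simp at hq

theorem prune?_var_fwd {t : Tm Γ ar V} {g : List ℕ → Option W} {w : Tm Γ ar W}
    {q : List ℕ} {y : W} (hw : prune? t g = some w) (hg : g q = some y)
    (hvalid : (subtermAt t q).isSome)
    (hmin : ∀ q', q' <+: q → q' ≠ q → g q' = none) :
    subtermAt w q = some (Tm.var y) := by
  induction t generalizing g w q with
  | var x =>
    cases q with
    | nil =>
      rw [prune?, hg] at hw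
      cases hw; rfl
    | cons i q => simp [subtermAt] at hvalid
  | node a ts ih =>
    cases q with
    | nil =>
      rw [prune?_node_cut _ _ hg] at hw
      cases hw; rfl
    | cons i q =>
      have hg0 : g [] = none := hmin [] (List.nil_prefix) (by simp)
      have hall : ∀ i : Fin (ar a), (prune? (ts i) (fun q => g (i.1 :: q))).isSome := by
        rw [← isSome_prune?_node hg0, hw]; rfl
      rw [prune?_node_eq hg0 hall] at hw
      cases hw
      simp only [subtermAt] at hvalid ⊢
      split
      next hlt =>
        rw [dif_pos hlt] at hvalid
        refine ih ⟨i, hlt⟩ (Option.some_get (hall ⟨i, hlt⟩)).symm hg hvalid ?_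
        intro q' hpre hne
        exact hmin (i :: q') (List.cons_prefix_cons.mpr ⟨rfl, hpre⟩) (by simpa using hne)
      next hlt => rw [dif_neg hlt] at hvalid; simp at hvalid


theorem perm_get_equiv {β : Type*} {l₁ l₂ : List β} (h : l₁.Perm l₂) :
    ∃ e : Fin l₁.length ≃ Fin l₂.length, ∀ i, l₁.get i = l₂.get (e i) := by
  induction h with
  | nil => exact ⟨Equiv.refl _, fun i => i.elim0⟩
  | cons x h ih =>
    obtain ⟨e, he⟩ := ih
    refine ⟨(finSuccEquiv _).trans (e.optionCongr.trans (finSuccEquiv _).symm), fun i => ?_⟩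
    refine Fin.cases ?_ (fun i => ?_) i
    · simp [finSuccEquiv_zero, finSuccEquiv_symm_none]
    · simp only [Equiv.trans_apply, finSuccEquiv_succ, Equiv.optionCongr_apply,
        Option.map_some, finSuccEquiv_symm_some, List.get_cons_succ]
      exact he i
  | swap x y l =>
    refine ⟨⟨fun i => ⟨if i.1 = 0 then 1 else if i.1 = 1 then 0 else i.1, ?_⟩,
            fun i => ⟨if i.1 = 0 then 1 else if i.1 = 1 then 0 else i.1, ?_⟩,
            fun i => ?_, fun i => ?_⟩, fun i => ?_⟩
    · have h2 := i.2
      simp only [List.length_cons] at h2 ⊢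
      split_ifs <;> omega
    · have h2 := i.2
      simp only [List.length_cons] at h2 ⊢
      split_ifs <;> omega
    · apply Fin.ext
      obtain ⟨v, hv⟩ := i
      match v with
      | 0 => simp
      | 1 => simp
      | (v+2) => simp
    · apply Fin.ext
      obtain ⟨v, hv⟩ := i
      match v with
      | 0 => simp
      | 1 => simp
      | (v+2) => simp
    · obtain ⟨v, hv⟩ := i
      simp only [Equiv.coe_fn_mk]
      match v with
      | 0 => simp
      | 1 => simp
      | (v+2) => simp
  | trans h1 h2 ih1 ih2 =>
    obtain ⟨e1, he1⟩ := ih1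
    obtain ⟨e2, he2⟩ := ih2
    exact ⟨e1.trans e2, fun i => (he1 i).trans (he2 (e1 i))⟩


variable {Γ : Type} {ar : Γ → ℕ} {V W : Type}

theorem var_occ_prefix {t : Tm Γ ar V} {q q' : List ℕ} {x x' : V}
    (h : subtermAt t q = some (.var x)) (h' : subtermAt t q' = some (.var x'))
    (hpre : q <+: q') : q = q' ∧ x = x' := by
  obtain ⟨r, rfl⟩ := hpre
  rw [subtermAt_append, h, Option.bind_some] at h'
  cases r with
  | nil =>
    simp only [subtermAt, Option.some.injEq] at h'
    cases h'
    exact ⟨by simp, rfl⟩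
  | cons a r => simp [subtermAt] at h'

theorem nodup_mem_singleton {A : Type*} [DecidableEq A] {l : List A} {b : A} (hn : l.Nodup)
    (h : ∀ a, a ∈ l ↔ a = b) : l = [b] := by
  have hb : b ∈ l := (h b).mpr rfl
  have hlen : l.length = 1 := by
    have hc : l.count b = 1 := List.count_eq_one_of_mem hn hb
    have : l.count b = l.length := List.count_eq_length.mpr (fun a ha => ((h a).mp ha).symm)
    omega
  obtain ⟨a, rfl⟩ := List.length_eq_one_iff.mp hlen
  have := (h a).mp (by simp)
  rw [this]

theorem count_flatten_varList {A : Type} [DecidableEq A] (ll : List (Tm Γ ar A)) (i : A) :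
    ((ll.map Tm.varList).flatten).count i = ∑ k : Fin ll.length, ((ll.get k).varList).count i := by
  rw [List.count_flatten, List.map_map]
  conv_lhs => rw [← List.ofFn_get ll, List.map_ofFn, List.sum_ofFn]
  rfl


/-- Characterization of the divisor relation for copyless non-erasing term
updates via subterm embeddings: `S` divides `T` iff there is a map sending each
element of `S` to an occurrence of it as a subterm inside `T`, such that (1) the
images are pairwise disjoint occurrences (no image contained in another), and
(2) the images cover all variable occurrences appearing in `T`. -/
theorem dividesCNE_iff_subterm_embedding {Γ : Type} {ar : Γ → ℕ} {α : ℕ}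
    (S T : List (Tm Γ ar (Fin α))) (hS : IsCNE α S) (hT : IsCNE α T) :
    DividesCNE S T ↔
      ∃ (j : Fin S.length → Fin T.length) (p : Fin S.length → List ℕ),
        (∀ i, subtermAt (T.get (j i)) (p i) = some (S.get i)) ∧
        (∀ i i', i ≠ i' → j i = j i' → ¬ p i <+: p i' ∧ ¬ p i' <+: p i) ∧
        (∀ (k : Fin T.length) (q : List ℕ) (x : Fin α),
          subtermAt (T.get k) q = some (Tm.var x) → ∃ i, j i = k ∧ p i <+: q) := by

  classical
  constructor
  · rintro ⟨Wl, hW, hperm⟩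
    obtain ⟨e, he⟩ := perm_get_equiv hperm
    have hsum : ∀ i : Fin S.length,
        (∑ k : Fin Wl.length, ((Wl.get k).varList).count i) = 1 := by
      intro i
      rw [← count_flatten_varList]
      rw [hW.count_eq]
      exact List.count_eq_one_of_mem (List.nodup_finRange _) (List.mem_finRange i)
    have hex : ∀ i : Fin S.length, ∃ (m : Fin Wl.length) (q : List ℕ),
        subtermAt (Wl.get m) q = some (Tm.var i) := by
      intro i
      by_contra hcon
      push_neg at hcon
      have hzero : ∀ k : Fin Wl.length, ((Wl.get k).varList).count i = 0 := by
        intro k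
        rw [List.count_eq_zero]
        intro hmem
        obtain ⟨q, hq⟩ := exists_occ_of_mem_varList hmem
        exact hcon k q hq
      have h1 := hsum i
      rw [Finset.sum_eq_zero (fun k _ => hzero k)] at h1
      simp at h1
    choose mIdx qIdx hq using hex
    have huniq : ∀ (i : Fin S.length) (m' : Fin Wl.length) (q' : List ℕ),
        subtermAt (Wl.get m') q' = some (Tm.var i) → m' = mIdx i ∧ q' = qIdx i := by
      intro i m' q' h'
      have hcomp1 : 0 < ((Wl.get (mIdx i)).varList).count i :=
        List.count_pos_iff.mpr (mem_varList_of_occ (hq i))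
      have h2 : 0 < ((Wl.get m').varList).count i :=
        List.count_pos_iff.mpr (mem_varList_of_occ h')
      have hm : m' = mIdx i := by
        by_contra hne
        have hle := Finset.sum_le_sum_of_subset
          (f := fun k => ((Wl.get k).varList).count i)
          (show ({m', mIdx i} : Finset (Fin Wl.length)) ⊆ Finset.univ from Finset.subset_univ _)
        rw [Finset.sum_pair hne, hsum i] at hle
        omega
      subst hm
      have hle : ((Wl.get (mIdx i)).varList).count i ≤ 1 := by
        rw [← hsum i]
        exact Finset.single_le_sum (f := fun k => ((Wl.get k).varList).count i)
          (fun k _ => Nat.zero_le _) (Finset.mem_univ (mIdx i))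
      have hc1 : ((Wl.get (mIdx i)).varList).count i = 1 := le_antisymm hle h2
      have hocc := occs_eq_singleton hc1 (hq i)
      have h3 := mem_occs.mpr h'
      rw [hocc] at h3
      exact ⟨rfl, by simpa using h3⟩
    have hL : Wl.length = (Wl.map (Tm.subst fun i => S.get i)).length :=
      (List.length_map _).symm
    refine ⟨fun i => e.symm (Fin.cast hL (mIdx i)), fun i => qIdx i, ?_, ?_, ?_⟩
    · intro i
      have hT' : T.get (e.symm (Fin.cast hL (mIdx i))) =
          Tm.subst (fun i => S.get i) (Wl.get (mIdx i)) := by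
        rw [he, Equiv.apply_symm_apply]
        simp [List.get_eq_getElem, List.getElem_map]
      rw [hT']
      exact subtermAt_subst (hq i)
    · intro i i' hne hj
      have hmm : mIdx i = mIdx i' := by
        have h5 := congrArg e hj
        simp only [Equiv.apply_symm_apply] at h5
        exact Fin.ext (by simpa [Fin.ext_iff] using h5)
      constructor
      · intro hpre
        have h' := hq i'
        rw [← hmm] at h'
        obtain ⟨-, hxx⟩ := var_occ_prefix (hq i) h' hpre
        exact hne hxx
      · intro hpre
        have h' := hq i'
        rw [← hmm] at h'
        obtain ⟨-, hxx⟩ := var_occ_prefix h' (hq i) hpre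
        exact hne hxx.symm
    · intro k qq x hx
      have hTk : T.get k =
          Tm.subst (fun i => S.get i) (Wl.get (Fin.cast hL.symm (e k))) := by
        rw [he]
        simp [List.get_eq_getElem, List.getElem_map]
      rw [hTk] at hx
      obtain ⟨q₁, q₂, y, rfl, hy1, hy2⟩ := subst_var_decomp hx
      obtain ⟨hm, hq'⟩ := huniq y _ _ hy1
      refine ⟨y, ?_, ?_⟩
      · show e.symm (Fin.cast hL (mIdx y)) = k
        rw [← hm]
        simp
      · show qIdx y <+: q₁ ++ q₂
        rw [← hq']
        exact List.prefix_append _ _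
  · rintro ⟨j, p, h1, h2, h3⟩
    set g : Fin T.length → List ℕ → Option (Fin S.length) := fun k q =>
      (List.finRange S.length).find? (fun i => decide (j i = k ∧ p i = q)) with hgdef
    have hG1 : ∀ {k q i}, g k q = some i → j i = k ∧ p i = q := by
      intro k q i h
      have := List.find?_some h
      exact of_decide_eq_true this
    have hG2 : ∀ i, g (j i) (p i) = some i := by
      intro i
      cases hfind : g (j i) (p i) with
      | none =>
        have := List.find?_eq_none.mp hfind i (List.mem_finRange i)
        simp at this
      | some i' =>
        obtain ⟨hj', hp'⟩ := hG1 hfind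
        by_cases hii : i' = i
        · rw [hii]
        · exact absurd (show p i' <+: p i by rw [hp']) ((h2 i' i hii hj').1)
    have hmin : ∀ i q', q' <+: p i → q' ≠ p i → g (j i) q' = none := by
      intro i q' hpre hne
      cases hfind : g (j i) q' with
      | none => rfl
      | some i'' =>
        obtain ⟨hj'', hp''⟩ := hG1 hfind
        have hne'' : i'' ≠ i := fun hh => hne (by rw [← hp'', hh])
        exact absurd (show p i'' <+: p i by rw [hp'']; exact hpre) ((h2 i'' i hne'' hj'').1)
    have hsome : ∀ k, (prune? (T.get k) (g k)).isSome := by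
      intro k
      apply prune?_isSome
      intro q x hqx
      obtain ⟨i, hji, hpre⟩ := h3 k q x hqx
      refine ⟨p i, hpre, ?_⟩
      rw [← hji, hG2 i]
      rfl
    set w : Fin T.length → Tm Γ ar (Fin S.length) :=
      fun k => (prune? (T.get k) (g k)).get (hsome k) with hwdef
    have hw : ∀ k, prune? (T.get k) (g k) = some (w k) :=
      fun k => (Option.some_get (hsome k)).symm
    have hsubst : ∀ k, (w k).subst (fun i => S.get i) = T.get k := by
      intro k
      apply subst_prune? (hw k)
      intro q y hy
      obtain ⟨hjy, hpy⟩ := hG1 hy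
      rw [← hpy, ← hjy]
      exact h1 y
    have hvar : ∀ k q y, subtermAt (w k) q = some (Tm.var y) → g k q = some y :=
      fun k q y h => prune?_var_back (hw k) h
    have hocc : ∀ i, subtermAt (w (j i)) (p i) = some (Tm.var i) := by
      intro i
      refine prune?_var_fwd (hw (j i)) (hG2 i) ?_ (hmin i)
      rw [h1 i]
      rfl
    have hcount : ∀ (i : Fin S.length) (k : Fin T.length),
        ((w k).varList).count i = if j i = k then 1 else 0 := by
      intro i k
      split
      next hj =>
        rw [← length_occs]
        have hsing : occs (w k) i = [p i] := by
          apply nodup_mem_singleton (nodup_occs _ _)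
          intro q
          constructor
          · intro hqm
            exact ((hG1 (hvar k q i (mem_occs.mp hqm))).2).symm
          · rintro rfl
            apply mem_occs.mpr
            rw [← hj]
            exact hocc i
        rw [hsing]
        rfl
      next hj =>
        rw [List.count_eq_zero]
        intro hmem
        obtain ⟨q, hqv⟩ := exists_occ_of_mem_varList hmem
        exact hj (hG1 (hvar k q i hqv)).1
    refine ⟨List.ofFn w, ?_, ?_⟩
    · rw [IsCNE, List.perm_iff_count]
      intro i
      rw [List.count_eq_one_of_mem (List.nodup_finRange _) (List.mem_finRange i),
        List.map_ofFn, List.count_flatten, List.map_ofFn, List.sum_ofFn]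
      simp only [Function.comp]
      rw [Finset.sum_congr rfl (fun k _ => hcount i k)]
      exact Fintype.sum_ite_eq (j i) (fun _ => 1)
    · have hmap : (List.ofFn w).map (Tm.subst fun i => S.get i) = T := by
        rw [List.map_ofFn]
        conv_rhs => rw [← List.ofFn_get T]
        congr 1
        funext k
        exact hsubst k
      rw [hmap]
end
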